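/- arXiv:1911.08983 — 4 statements merged into one kernel-verified Lean document; each statement's English description precedes it below -/
import Mathlib

section
/- The polynomial space B_1 = {(β₁ + β₄ r + β₃ z - β₆ r z, -n β₁ + β₂ r - n β₃ z, β₅ r + β₆ r²) : β_i ∈ ℝ} is mapped by curl^n_{rz} into the space C_1 = {(n γ₁ + γ₂ r, γ₁ + γ₃ r, γ₄ + γ₂ z) : γ_i ∈ ℝ}. -/
/-!
For `u ∈ B₁` the quotients `u_z / r` and `(n u_r + u_θ) / r` in `curl^n_{rz}` are polynomials,
since `u_z` and `n u_r + u_θ` vanish on the axis `r = 0` (the `β₁` and `β₃` terms cancel).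
The partial derivatives are ordinary derivatives along the coordinate lines, and the `γᵢ`
are read off by comparing coefficients.
-/

noncomputable def pdr (f : ℝ × ℝ → ℝ) (p : ℝ × ℝ) : ℝ := fderiv ℝ f p (1, 0)
noncomputable def pdz (f : ℝ × ℝ → ℝ) (p : ℝ × ℝ) : ℝ := fderiv ℝ f p (0, 1)

/-- `curl^n_{rz}(u_r,u_θ,u_z)`. -/
noncomputable def curlN (n : ℤ) (ur uθ uz : ℝ × ℝ → ℝ) (p : ℝ × ℝ) : ℝ × ℝ × ℝ :=
  (-(((n : ℝ) / p.1) * uz p + pdz uθ p),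
   pdz ur p - pdr uz p,
   ((n : ℝ) * ur p + uθ p) / p.1 + pdr uθ p)

theorem pdr_eq_deriv {f : ℝ × ℝ → ℝ} {p : ℝ × ℝ} (hf : DifferentiableAt ℝ f p) :
    pdr f p = deriv (fun r => f (r, p.2)) p.1 := by
  have hline : HasDerivAt (fun r : ℝ => (r, p.2)) (1, 0) p.1 :=
    (hasDerivAt_id p.1).prodMk (hasDerivAt_const p.1 p.2)
  exact (hf.hasFDerivAt.comp_hasDerivAt p.1 hline).deriv.symm

theorem pdz_eq_deriv {f : ℝ × ℝ → ℝ} {p : ℝ × ℝ} (hf : DifferentiableAt ℝ f p) :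
    pdz f p = deriv (fun z => f (p.1, z)) p.2 := by
  have hline : HasDerivAt (fun z : ℝ => (p.1, z)) (0, 1) p.2 :=
    (hasDerivAt_const p.2 p.1).prodMk (hasDerivAt_id p.2)
  exact (hf.hasFDerivAt.comp_hasDerivAt p.2 hline).deriv.symm

theorem curlN_B1_mem_C1_general (n : ℤ) (β₁ β₂ β₃ β₄ β₅ β₆ : ℝ)
    (ur uθ uz : ℝ × ℝ → ℝ)
    (hur : ∀ p : ℝ × ℝ, ur p = β₁ + β₄ * p.1 + β₃ * p.2 - β₆ * p.1 * p.2)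
    (huθ : ∀ p : ℝ × ℝ, uθ p = -(n : ℝ) * β₁ + β₂ * p.1 - (n : ℝ) * β₃ * p.2)
    (huz : ∀ p : ℝ × ℝ, uz p = β₅ * p.1 + β₆ * p.1 ^ 2) :
    ∃ γ₁ γ₂ γ₃ γ₄ : ℝ, ∀ p : ℝ × ℝ, p.1 ≠ 0 →
      curlN n ur uθ uz p =
        ((n : ℝ) * γ₁ + γ₂ * p.1, γ₁ + γ₃ * p.1, γ₄ + γ₂ * p.2) := by
  refine ⟨β₃ - β₅, -n * β₆, -3 * β₆, n * β₄ + 2 * β₂, fun p hp => ?_⟩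
  have hzθ : pdz uθ p = -n * β₃ := by
    rw [funext huθ, pdz_eq_deriv (by fun_prop)]; simp (disch := fun_prop)
  have hzr : pdz ur p = β₃ - β₆ * p.1 := by
    rw [funext hur, pdz_eq_deriv (by fun_prop)]; simp (disch := fun_prop)
  have hrz : pdr uz p = β₅ + β₆ * (2 * p.1) := by
    rw [funext huz, pdr_eq_deriv (by fun_prop)]; simp (disch := fun_prop)
  have hrθ : pdr uθ p = β₂ := by
    rw [funext huθ, pdr_eq_deriv (by fun_prop)]; simp (disch := fun_prop)
  rw [curlN, hzθ, hzr, hrz, hrθ, hur, huθ, huz]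
  ext <;> field_simp <;> ring

/-- `curl^n_{rz}` maps `B₁ = {(β₁ + β₄ r + β₃ z - β₆ r z, -n β₁ + β₂ r - n β₃ z,
β₅ r + β₆ r²)}` into `C₁ = {(n γ₁ + γ₂ r, γ₁ + γ₃ r, γ₄ + γ₂ z)}`. -/
theorem curlN_B1_mem_C1 (n : ℤ) (hn : n ≠ 0) (β₁ β₂ β₃ β₄ β₅ β₆ : ℝ)
    (ur uθ uz : ℝ × ℝ → ℝ)
    (hur : ∀ p : ℝ × ℝ, ur p = β₁ + β₄ * p.1 + β₃ * p.2 - β₆ * p.1 * p.2)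
    (huθ : ∀ p : ℝ × ℝ, uθ p = -(n : ℝ) * β₁ + β₂ * p.1 - (n : ℝ) * β₃ * p.2)
    (huz : ∀ p : ℝ × ℝ, uz p = β₅ * p.1 + β₆ * p.1 ^ 2) :
    ∃ γ₁ γ₂ γ₃ γ₄ : ℝ, ∀ p : ℝ × ℝ, p.1 ≠ 0 →
      curlN n ur uθ uz p =
        ((n : ℝ) * γ₁ + γ₂ * p.1, γ₁ + γ₃ * p.1, γ₄ + γ₂ * p.2) :=
  curlN_B1_mem_C1_general n β₁ β₂ β₃ β₄ β₅ β₆ ur uθ uz hur huθ huz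
end

section
/- Let D be a disk of radius ρ centered at a point a with distance at least ρ from the z-axis, in the half-plane {r ≥ 0}, and suppose η : D → ℝ satisfies ∫_D r(y)³ η(y) p(y) dy = p(a) for all polynomials p of degree at most l. Then ∫_D r(y)³ |η(y)| dy ≤ C, where C depends only on l and an upper bound for the ratio max_{y∈D} r(y) / min_{y∈D} r(y) (which is at most 3 here), via the Cauchy–Schwarz bound ∫_D r³|η| dy ≤ ‖r^{3/2}η‖_{L²(D)} · (∫_D r³ dy)^{1/2} combined with the estimate ‖r^{3/2}η‖²_{L²(D)} ≤ C/(ρ² r_a³) with r_a = min_{y∈D} r(y). -/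
open MeasureTheory

/-- `f` is a real polynomial in `(r,z)` of total degree at most `l`. -/
def IsPolyDeg (l : ℕ) (f : ℝ × ℝ → ℝ) : Prop :=
  ∃ P : MvPolynomial (Fin 2) ℝ, P.totalDegree ≤ l ∧
    ∀ p : ℝ × ℝ, f p = MvPolynomial.eval ![p.1, p.2] P

/-!
Polynomials of degree `≤ l` form a finite-dimensional space on which evaluation at the centre of
the unit ball is bounded by the `L²` norm on that ball; by affine invariance of the space,
`f(a)² ≤ C ρ⁻² ∫_B f²` for every ball `B` of radius `ρ` about `a` (balls of `ℝ × ℝ` are squares,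
for the sup norm). On the ball of radius `ρ/2` about `a`, which lies in the disk `D`, the weight
`r³` is at least `(a_r/2)³`. Testing the reproducing property with `q = η` gives
`E := ∫_D r³ η² = η(a)`, so `E² = η(a)² ≤ C' E / (ρ² a_r³)` and `E ≤ C' / (ρ² a_r³)`.
As `∫_D r³ ≤ 32 a_r³ ρ²`, the weighted Cauchy–Schwarz inequality bounds `∫_D r³ |η|` by
`√(32 C')`.
-/

open MvPolynomial Metric

theorem sq_integral_mul_le_integral_mul_sq {α : Type*} [MeasurableSpace α] {μ : Measure α}
    {w f g : α → ℝ} (hw : 0 ≤ᵐ[μ] w) (hf : Integrable (fun x => w x * f x ^ 2) μ)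
    (hfg : Integrable (fun x => w x * f x * g x) μ) (hg : Integrable (fun x => w x * g x ^ 2) μ) :
    (∫ x, w x * f x * g x ∂μ) ^ 2 ≤ (∫ x, w x * f x ^ 2 ∂μ) * ∫ x, w x * g x ^ 2 ∂μ := by
  have hquad : ∀ t : ℝ, 0 ≤ (∫ x, w x * g x ^ 2 ∂μ) * (t * t)
      + 2 * (∫ x, w x * f x * g x ∂μ) * t + ∫ x, w x * f x ^ 2 ∂μ := fun t => calc
    0 ≤ ∫ x, w x * (t * g x + f x) ^ 2 ∂μ :=
      integral_nonneg_of_ae (hw.mono fun x hx => mul_nonneg hx (sq_nonneg _))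
    _ = ∫ x, (t * t) * (w x * g x ^ 2) + (2 * t) * (w x * f x * g x) + w x * f x ^ 2 ∂μ := by
      congr 1 with x
      ring
    _ = _ := by
      rw [integral_add (by exact (hg.const_mul _).add (hfg.const_mul _)) hf,
        integral_add (hg.const_mul _) (hfg.const_mul _), integral_const_mul, integral_const_mul]
      ring
  have hdiscrim := discrim_le_zero hquad
  rw [discrim] at hdiscrim
  nlinarith

theorem MeasureTheory.Measure.isOpenPosMeasure_comap_subtype_val {X : Type*}
    [TopologicalSpace X] [MeasurableSpace X] [BorelSpace X] (μ : Measure X) [μ.IsOpenPosMeasure]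
    {s : Set X} (hs : MeasurableSet s) (hsi : s ⊆ closure (interior s)) :
    (μ.comap (Subtype.val : s → X)).IsOpenPosMeasure := by
  refine ⟨fun U hU ⟨x, hx⟩ => ?_⟩
  obtain ⟨O, hO, rfl⟩ := isOpen_induced_iff.mp hU
  rw [(MeasurableEmbedding.subtype_coe hs).comap_apply, Subtype.image_preimage_coe]
  obtain ⟨y, hyO, hyi⟩ := mem_closure_iff.mp (hsi x.2) O hO hx
  have hsub : O ∩ interior s ⊆ s ∩ O := fun z hz => ⟨interior_subset hz.2, hz.1⟩
  exact fun h0 =>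
    (hO.inter isOpen_interior).measure_ne_zero μ ⟨y, hyO, hyi⟩ (measure_mono_null hsub h0)

theorem ContinuousMap.exists_sq_le_mul_integral_sq {X : Type*} [TopologicalSpace X]
    [CompactSpace X] [MeasurableSpace X] [BorelSpace X] (μ : Measure X) [IsFiniteMeasure μ]
    [μ.IsOpenPosMeasure] (V : Submodule ℝ C(X, ℝ)) [FiniteDimensional ℝ V] :
    ∃ C, 0 < C ∧ ∀ g ∈ V, ∀ x, g x ^ 2 ≤ C * ∫ y, g y ^ 2 ∂μ := by
  obtain ⟨K, hK, hanti⟩ :=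
    ((ContinuousMap.toLp 2 μ ℝ).toLinearMap.comp V.subtype).exists_antilipschitzWith
      (LinearMap.ker_eq_bot.mpr fun g h hgh => Subtype.ext (ContinuousMap.toLp_injective μ hgh))
  refine ⟨(K : ℝ) ^ 2, by positivity, fun g hg x => ?_⟩
  have hnorm : ‖g‖ ≤ K * ‖ContinuousMap.toLp 2 μ ℝ g‖ := by
    simpa using hanti.le_mul_norm_sub 0 ⟨g, hg⟩
  have hL2 : ‖ContinuousMap.toLp 2 μ ℝ g‖ ^ 2 = ∫ y, g y ^ 2 ∂μ := by
    rw [← real_inner_self_eq_norm_sq, ContinuousMap.inner_toLp]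
    simp [sq]
  calc g x ^ 2 ≤ ‖g‖ ^ 2 := by
        rw [← sq_abs]
        exact pow_le_pow_left₀ (abs_nonneg _) (g.norm_coe_le_norm x) 2
    _ ≤ (K * ‖ContinuousMap.toLp 2 μ ℝ g‖) ^ 2 := pow_le_pow_left₀ (norm_nonneg _) hnorm 2
    _ = K ^ 2 * ∫ y, g y ^ 2 ∂μ := by rw [mul_pow, hL2]

theorem MvPolynomial.totalDegree_bind₁_le {σ τ R : Type*} [CommSemiring R]
    {g : σ → MvPolynomial τ R} {d : ℕ} (hg : ∀ i, (g i).totalDegree ≤ d) (P : MvPolynomial σ R) :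
    (bind₁ g P).totalDegree ≤ P.totalDegree * d := by
  conv_lhs => rw [P.as_sum, map_sum]
  refine totalDegree_finsetSum_le fun m hm => ?_
  rw [bind₁_monomial]
  calc (C (coeff m P) * ∏ i ∈ m.support, g i ^ m i).totalDegree
      ≤ ∑ i ∈ m.support, (g i ^ m i).totalDegree := by
        refine (totalDegree_mul _ _).trans ?_
        rw [totalDegree_C, zero_add]
        exact totalDegree_finsetProd _ _
    _ ≤ ∑ i ∈ m.support, m i * d :=
        Finset.sum_le_sum fun i _ => (totalDegree_pow _ _).trans (Nat.mul_le_mul_left _ (hg i))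
    _ = m.degree * d := by rw [← Finset.sum_mul]; rfl
    _ ≤ P.totalDegree * d := Nat.mul_le_mul_right _ (le_totalDegree hm)

theorem IsPolyDeg.continuous {l : ℕ} {f : ℝ × ℝ → ℝ} (hf : IsPolyDeg l f) : Continuous f := by
  obtain ⟨P, -, hP⟩ := hf
  rw [funext hP]
  exact (continuous_eval P).comp (by fun_prop)

theorem IsPolyDeg.comp_add_smul {l : ℕ} {f : ℝ × ℝ → ℝ} (hf : IsPolyDeg l f) (a : ℝ × ℝ)
    (c : ℝ) : IsPolyDeg l fun z => f (a + c • z) := by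
  obtain ⟨P, hdeg, hP⟩ := hf
  let g : Fin 2 → MvPolynomial (Fin 2) ℝ := fun i => C (![a.1, a.2] i) + C c * X i
  have hg : ∀ i, (g i).totalDegree ≤ 1 := fun i =>
    (totalDegree_add _ _).trans <| max_le (by simp) <|
      (totalDegree_mul _ _).trans (by simp [totalDegree_X])
  refine ⟨bind₁ g P, by simpa using (totalDegree_bind₁_le hg P).trans (by simpa using hdeg),
    fun z => ?_⟩
  dsimp only
  rw [hP, eval, eval, eval₂Hom_bind₁]
  congr 2 with i
  fin_cases i <;> simp [g]

noncomputable def MvPolynomial.toContinuousMapOnPlane (s : Set (ℝ × ℝ)) :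
    MvPolynomial (Fin 2) ℝ →ₗ[ℝ] C(s, ℝ) where
  toFun P := ⟨fun x => eval ![x.1.1, x.1.2] P, (continuous_eval P).comp (by fun_prop)⟩
  map_add' P Q := ContinuousMap.ext fun x => map_add (eval _) P Q
  map_smul' c P := ContinuousMap.ext fun x => smul_eval _ P c

theorem IsPolyDeg.exists_sq_apply_zero_le (l : ℕ) :
    ∃ C, 0 < C ∧ ∀ f, IsPolyDeg l f →
      f 0 ^ 2 ≤ C * ∫ p in closedBall (0 : ℝ × ℝ) 1, f p ^ 2 := by
  set K := closedBall (0 : ℝ × ℝ) 1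
  set μ : Measure K := volume.comap Subtype.val
  have : CompactSpace K := isCompact_iff_compactSpace.mp (isCompact_closedBall _ _)
  have : IsFiniteMeasure μ := ⟨by
    rw [(MeasurableEmbedding.subtype_coe measurableSet_closedBall).comap_apply, Set.image_univ,
      Subtype.range_coe]
    exact measure_closedBall_lt_top⟩
  have : μ.IsOpenPosMeasure := Measure.isOpenPosMeasure_comap_subtype_val volume
    measurableSet_closedBall (by rw [interior_closedBall _ one_ne_zero, closure_ball _ one_ne_zero])
  obtain ⟨C, hC, hV⟩ := ContinuousMap.exists_sq_le_mul_integral_sq μ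
    ((restrictTotalDegree (Fin 2) ℝ l).map (toContinuousMapOnPlane K))
  refine ⟨C, hC, fun f ⟨P, hdeg, hP⟩ => ?_⟩
  have h := hV (toContinuousMapOnPlane K P)
    (Submodule.mem_map_of_mem ((mem_restrictTotalDegree _ _ _).2 hdeg))
    ⟨0, mem_closedBall_self zero_le_one⟩
  simp only [toContinuousMapOnPlane, LinearMap.coe_mk, AddHom.coe_mk, ContinuousMap.coe_mk,
    ← hP] at h
  rwa [integral_subtype_comap measurableSet_closedBall (fun p => f p ^ 2)] at h

theorem IsPolyDeg.exists_sq_le_integral_closedBall (l : ℕ) :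
    ∃ C, 0 < C ∧ ∀ f, IsPolyDeg l f → ∀ a (ρ : ℝ), 0 < ρ →
      f a ^ 2 ≤ C / ρ ^ 2 * ∫ p in closedBall a ρ, f p ^ 2 := by
  obtain ⟨C, hC, hcore⟩ := exists_sq_apply_zero_le l
  refine ⟨C, hC, fun f hf a ρ hρ => ?_⟩
  have hscale : ∫ z in closedBall (0 : ℝ × ℝ) 1, f (a + ρ • z) ^ 2
      = (ρ ^ 2)⁻¹ * ∫ p in closedBall a ρ, f p ^ 2 := by
    rw [Measure.setIntegral_comp_smul_of_pos volume (fun w => f (a + w) ^ 2) _ hρ,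
      _root_.smul_closedBall _ _ zero_le_one,
      ← (measurePreserving_add_left volume a).setIntegral_preimage_emb
        (measurableEmbedding_addLeft a) _ (closedBall a ρ)]
    simp [Module.finrank_prod, preimage_add_closedBall, abs_of_pos hρ]
  have h := hcore _ (hf.comp_add_smul a ρ)
  rwa [hscale, smul_zero, add_zero, ← mul_assoc, ← div_eq_mul_inv] at h

theorem mem_closedBall_prod_iff {a p : ℝ × ℝ} {ρ : ℝ} :
    p ∈ closedBall a ρ ↔ |p.1 - a.1| ≤ ρ ∧ |p.2 - a.2| ≤ ρ := by
  simp [Prod.dist_eq, Real.dist_eq]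

theorem volume_real_closedBall_prod (a : ℝ × ℝ) {ρ : ℝ} (hρ : 0 ≤ ρ) :
    volume.real (closedBall a ρ) = 4 * ρ ^ 2 := by
  rw [← closedBall_prod_same, Measure.real, Measure.volume_eq_prod, Measure.prod_prod,
    Real.volume_closedBall, Real.volume_closedBall, ENNReal.toReal_mul,
    ENNReal.toReal_ofReal (by positivity)]
  ring

def disk (a : ℝ × ℝ) (ρ : ℝ) : Set (ℝ × ℝ) := {p | (p.1 - a.1) ^ 2 + (p.2 - a.2) ^ 2 ≤ ρ ^ 2}

theorem mem_disk {a p : ℝ × ℝ} {ρ : ℝ} : p ∈ disk a ρ ↔ (p.1 - a.1) ^ 2 + (p.2 - a.2) ^ 2 ≤ ρ ^ 2 :=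
  Iff.rfl

theorem isClosed_disk (a : ℝ × ℝ) (ρ : ℝ) : IsClosed (disk a ρ) :=
  isClosed_le (by fun_prop) continuous_const

theorem disk_subset_closedBall (a : ℝ × ℝ) {ρ : ℝ} (hρ : 0 ≤ ρ) : disk a ρ ⊆ closedBall a ρ := by
  intro p hp
  rw [mem_disk] at hp
  exact mem_closedBall_prod_iff.2
    ⟨abs_le_of_sq_le_sq (by nlinarith [sq_nonneg (p.2 - a.2)]) hρ,
      abs_le_of_sq_le_sq (by nlinarith [sq_nonneg (p.1 - a.1)]) hρ⟩

theorem isCompact_disk (a : ℝ × ℝ) {ρ : ℝ} (hρ : 0 ≤ ρ) : IsCompact (disk a ρ) :=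
  (isCompact_closedBall a ρ).of_isClosed_subset (isClosed_disk a ρ) (disk_subset_closedBall a hρ)

theorem fst_mem_Icc_of_mem_disk {a p : ℝ × ℝ} {ρ : ℝ} (hρ : 0 ≤ ρ) (hp : p ∈ disk a ρ) :
    p.1 ∈ Set.Icc (a.1 - ρ) (a.1 + ρ) := by
  have := abs_le.1 (mem_closedBall_prod_iff.1 (disk_subset_closedBall a hρ hp)).1
  constructor <;> linarith

theorem closedBall_half_subset_disk (a : ℝ × ℝ) (ρ : ℝ) : closedBall a (ρ / 2) ⊆ disk a ρ := by
  intro p hp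
  obtain ⟨h1, h2⟩ := mem_closedBall_prod_iff.1 hp
  rw [mem_disk]
  nlinarith [sq_abs (p.1 - a.1), sq_abs (p.2 - a.2), abs_nonneg (p.1 - a.1),
    abs_nonneg (p.2 - a.2)]

theorem ae_restrict_disk_fst_pow_nonneg {a : ℝ × ℝ} {ρ : ℝ} (hρ : 0 ≤ ρ) (ha : ρ ≤ a.1) (n : ℕ) :
    0 ≤ᵐ[volume.restrict (disk a ρ)] fun p : ℝ × ℝ => p.1 ^ n :=
  (ae_restrict_iff' (isClosed_disk a ρ).measurableSet).2 <| .of_forall fun _ hp =>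
    pow_nonneg (by linarith [(fst_mem_Icc_of_mem_disk hρ hp).1]) n

theorem setIntegral_disk_fst_pow_three_le {a : ℝ × ℝ} {ρ : ℝ} (hρ : 0 ≤ ρ) (ha : ρ ≤ a.1) :
    ∫ p in disk a ρ, p.1 ^ 3 ≤ 32 * a.1 ^ 3 * ρ ^ 2 := by
  have hD := disk_subset_closedBall a hρ
  calc ∫ p in disk a ρ, p.1 ^ 3
      ≤ ∫ p in disk a ρ, (2 * a.1) ^ 3 :=
        setIntegral_mono_on
          ((continuous_fst.pow 3).continuousOn.integrableOn_compact (isCompact_disk a hρ))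
          (integrableOn_const (isCompact_disk a hρ).measure_lt_top.ne)
          (isClosed_disk a ρ).measurableSet fun p hp => by
            have := fst_mem_Icc_of_mem_disk hρ hp
            exact pow_le_pow_left₀ (by linarith [this.1]) (by linarith [this.2]) 3
    _ = volume.real (disk a ρ) * (2 * a.1) ^ 3 := setIntegral_const _
    _ ≤ volume.real (closedBall a ρ) * (2 * a.1) ^ 3 := by
        have : 0 ≤ a.1 := hρ.trans ha
        gcongr
        exact measure_closedBall_lt_top.ne
    _ = 32 * a.1 ^ 3 * ρ ^ 2 := by rw [volume_real_closedBall_prod a hρ]; ring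

theorem IsPolyDeg.exists_sq_le_weighted_integral_disk (l : ℕ) :
    ∃ C, 0 < C ∧ ∀ f, IsPolyDeg l f → ∀ ρ : ℝ, 0 < ρ → ∀ a : ℝ × ℝ, ρ ≤ a.1 →
      f a ^ 2 ≤ C / (ρ ^ 2 * a.1 ^ 3) * ∫ p in disk a ρ, p.1 ^ 3 * f p ^ 2 := by
  obtain ⟨C, hC, hpt⟩ := exists_sq_le_integral_closedBall l
  refine ⟨32 * C, by positivity, fun f hf ρ hρ a ha => ?_⟩
  have ha1 : 0 < a.1 := hρ.trans_le ha
  have hcont : Continuous fun p : ℝ × ℝ => p.1 ^ 3 * f p ^ 2 := by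
    have := hf.continuous
    fun_prop
  have hweight : ∫ p in closedBall a (ρ / 2), f p ^ 2
      ≤ ∫ p in closedBall a (ρ / 2), (2 / a.1) ^ 3 * (p.1 ^ 3 * f p ^ 2) := by
    refine setIntegral_mono_on ((hf.continuous.pow 2).continuousOn.integrableOn_compact
      (isCompact_closedBall _ _)) ((hcont.const_mul _).continuousOn.integrableOn_compact
      (isCompact_closedBall _ _)) measurableSet_closedBall fun p hp => ?_
    have hfst := abs_le.1 (mem_closedBall_prod_iff.1 hp).1
    have : 1 ≤ (2 / a.1) ^ 3 * p.1 ^ 3 := by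
      rw [← mul_pow]
      exact one_le_pow₀ (by rw [div_mul_eq_mul_div, le_div_iff₀ ha1]; linarith)
    nlinarith [sq_nonneg (f p)]
  have henlarge : ∫ p in closedBall a (ρ / 2), p.1 ^ 3 * f p ^ 2
      ≤ ∫ p in disk a ρ, p.1 ^ 3 * f p ^ 2 :=
    setIntegral_mono_set (hcont.continuousOn.integrableOn_compact (isCompact_disk a hρ.le))
      ((ae_restrict_disk_fst_pow_nonneg hρ.le ha 3).mono fun p hp => mul_nonneg hp (sq_nonneg _))
      (closedBall_half_subset_disk a ρ).eventuallyLE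
  rw [integral_const_mul] at hweight
  calc f a ^ 2 ≤ C / (ρ / 2) ^ 2 * ∫ p in closedBall a (ρ / 2), f p ^ 2 :=
        hpt f hf a _ (by positivity)
    _ ≤ C / (ρ / 2) ^ 2 * ((2 / a.1) ^ 3 * ∫ p in disk a ρ, p.1 ^ 3 * f p ^ 2) := by
        gcongr
        exact hweight.trans (by gcongr)
    _ = 32 * C / (ρ ^ 2 * a.1 ^ 3) * ∫ p in disk a ρ, p.1 ^ 3 * f p ^ 2 := by
        field_simp
        ring

theorem exists_setIntegral_disk_mul_sq_le_of_reproducing (l : ℕ) :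
    ∃ C, 0 < C ∧ ∀ ρ : ℝ, 0 < ρ → ∀ a : ℝ × ℝ, ρ ≤ a.1 → ∀ η, IsPolyDeg l η →
      (∀ q, IsPolyDeg l q → ∫ p in disk a ρ, p.1 ^ 3 * η p * q p = q a) →
        ∫ p in disk a ρ, p.1 ^ 3 * η p ^ 2 ≤ C / (ρ ^ 2 * a.1 ^ 3) := by
  obtain ⟨C, hC, hpt⟩ := IsPolyDeg.exists_sq_le_weighted_integral_disk l
  refine ⟨C, hC, fun ρ hρ a ha η hη hrep => ?_⟩
  have hE : ∫ p in disk a ρ, p.1 ^ 3 * η p ^ 2 = η a := by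
    simpa only [sq, mul_assoc] using hrep η hη
  have hE0 : 0 ≤ ∫ p in disk a ρ, p.1 ^ 3 * η p ^ 2 := integral_nonneg_of_ae
    ((ae_restrict_disk_fst_pow_nonneg hρ.le ha 3).mono fun p hp => mul_nonneg hp (sq_nonneg _))
  have hK : 0 ≤ C / (ρ ^ 2 * a.1 ^ 3) := by
    have : 0 < a.1 := hρ.trans_le ha
    positivity
  have := hpt η hη ρ hρ a ha
  rw [← hE] at this
  nlinarith

/-- If `D` is the disk of radius `ρ` centered at `a` with `a.1 ≥ ρ` and the polynomial
`η` of degree `≤ l` satisfies the reproducing property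
`∫_D r³ η p = p(a)` for all polynomials `p` of degree `≤ l`, then
`∫_D r³ |η| ≤ C` with `C` depending only on `l`. -/
theorem weighted_reproducing_kernel_L1_bound (l : ℕ) :
    ∃ C : ℝ, 0 < C ∧
      ∀ ρ : ℝ, 0 < ρ → ∀ a : ℝ × ℝ, ρ ≤ a.1 →
        ∀ η : ℝ × ℝ → ℝ, IsPolyDeg l η →
          (∀ q : ℝ × ℝ → ℝ, IsPolyDeg l q →
            (∫ p in {p : ℝ × ℝ | (p.1 - a.1) ^ 2 + (p.2 - a.2) ^ 2 ≤ ρ ^ 2},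
              p.1 ^ 3 * η p * q p) = q a) →
          (∫ p in {p : ℝ × ℝ | (p.1 - a.1) ^ 2 + (p.2 - a.2) ^ 2 ≤ ρ ^ 2},
            p.1 ^ 3 * |η p|) ≤ C := by
  obtain ⟨C, hC, henergy⟩ := exists_setIntegral_disk_mul_sq_le_of_reproducing l
  refine ⟨√(32 * C), by positivity, fun ρ hρ a ha η hη hrep => ?_⟩
  have hE := henergy ρ hρ a ha η hη hrep
  have hV := setIntegral_disk_fst_pow_three_le hρ.le ha
  have hD := isCompact_disk a hρ.le
  have hw := ae_restrict_disk_fst_pow_nonneg hρ.le ha 3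
  have hηc := hη.continuous
  have hCS := sq_integral_mul_le_integral_mul_sq hw (f := fun p => |η p|) (g := 1)
    ((by fun_prop : Continuous _).continuousOn.integrableOn_compact hD)
    ((by fun_prop : Continuous _).continuousOn.integrableOn_compact hD)
    ((by fun_prop : Continuous _).continuousOn.integrableOn_compact hD)
  simp only [Pi.one_apply, mul_one, one_pow, sq_abs] at hCS
  refine le_of_abs_le (abs_le_of_sq_le_sq ?_ (by positivity))
  have ha1 : 0 < a.1 := hρ.trans_le ha
  calc _ ≤ _ := hCS
    _ ≤ C / (ρ ^ 2 * a.1 ^ 3) * (32 * a.1 ^ 3 * ρ ^ 2) :=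
        mul_le_mul hE hV (integral_nonneg_of_ae hw) (by positivity)
    _ = √(32 * C) ^ 2 := by
        rw [Real.sq_sqrt (by positivity)]
        field_simp
end

section
/- (Weighted inverse estimate) For every integer l ≥ 0 there is a constant C (depending only on l and the shape-regularity constant) such that for every triangle K in the closed half-plane {r ≥ 0} with diameter h_K and inscribed-circle diameter ρ_K satisfying h_K/ρ_K ≤ σ, and every polynomial v of degree ≤ l, one has r_K h_K² ‖v‖²_{L^∞(K)} ≤ C ∫_K v² r dr dz, where r_K = max_{x∈K} r(x). -/
/-!
The inscribed disc `B(c, t)` of `K` lies in `{r ≥ 0}`, so `t ≤ c_r`; hence `r ≥ c_r / 2` on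
`B(c, t/2)` and `r_K ≤ c_r + h_K ≤ (1 + 2σ) c_r`. It therefore suffices to bound `(t/2)² v(x)²`
by a multiple of `∫_{B(c, t/2)} v²` for `x ∈ K`, i.e. for `x` at distance `≤ 4σ · t/2` from `c`.
After an affine change of variables this compares, on the finite-dimensional space of
polynomials of degree `≤ l`, `sup_{‖y‖ ≤ R} v(y)²` with `∫_{B(0,1)} v²`; the latter vanishes
only at `v = 0`, so the two are comparable by compactness of the unit sphere.
-/

open MeasureTheory

open Metric

theorem exists_sq_le_mul_of_homogeneous
    {E Y : Type*} [NormedAddCommGroup E] [NormedSpace ℝ E] [FiniteDimensional ℝ E]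
    [TopologicalSpace Y] {K : Set Y} (hK : IsCompact K)
    {G : E → Y → ℝ} (hG : Continuous (Function.uncurry G))
    (hG_smul : ∀ (r : ℝ) a y, G (r • a) y = r * G a y)
    {Q : E → ℝ} (hQ : Continuous Q) (hQ_smul : ∀ (r : ℝ) a, Q (r • a) = r ^ 2 * Q a)
    (hQ_pos : ∀ a ≠ 0, 0 < Q a) :
    ∃ C > 0, ∀ a, ∀ y ∈ K, G a y ^ 2 ≤ C * Q a := by
  have hQ_ne : ∀ p ∈ sphere (0 : E) 1 ×ˢ K, Q p.1 ≠ 0 := fun p hp =>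
    (hQ_pos _ (ne_zero_of_mem_unit_sphere ⟨p.1, hp.1⟩)).ne'
  have hratio : ContinuousOn (fun p : E × Y => G p.1 p.2 ^ 2 / Q p.1) (sphere 0 1 ×ˢ K) :=
    (hG.pow 2).continuousOn.div (hQ.comp continuous_fst).continuousOn hQ_ne
  obtain ⟨C, hC⟩ := (((isCompact_sphere 0 1).prod hK).image_of_continuousOn hratio).bddAbove
  refine ⟨max C 1, by positivity, fun a y hy => ?_⟩
  rcases eq_or_ne a 0 with rfl | ha
  · have hG0 : G 0 y = 0 := by simpa using hG_smul 0 0 y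
    have hQ0 : Q 0 = 0 := by simpa using hQ_smul 0 0
    simp [hG0, hQ0]
  set u := ‖a‖⁻¹ • a
  have hu : u ∈ sphere (0 : E) 1 := by simp [u, norm_smul, ha]
  have hau : a = ‖a‖ • u := by simp [u, smul_smul, ha]
  have hQu : 0 < Q u := hQ_pos u (ne_zero_of_mem_unit_sphere ⟨u, hu⟩)
  have hGu : G u y ^ 2 ≤ C * Q u :=
    (div_le_iff₀ hQu).1 (hC ⟨(u, y), ⟨hu, hy⟩, rfl⟩)
  rw [hau, hG_smul, hQ_smul, mul_pow, mul_left_comm]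
  gcongr
  exact hGu.trans (by gcongr; exact le_max_left _ _)

theorem setIntegral_pos_of_continuous_of_mem_interior {X : Type*} [TopologicalSpace X]
    [MeasurableSpace X] [OpensMeasurableSpace X] {μ : Measure X} [μ.IsOpenPosMeasure]
    {f : X → ℝ} (hf : Continuous f) (hf_nonneg : 0 ≤ f) {s : Set X}
    (hfs : IntegrableOn f s μ) {x : X} (hx : x ∈ interior s) (hfx : f x ≠ 0) :
    0 < ∫ y in s, f y ∂μ := by
  rw [setIntegral_pos_iff_support_of_nonneg_ae (.of_forall hf_nonneg) hfs]
  calc 0 < μ (Function.support f ∩ interior s) :=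
        (hf.isOpen_support.inter isOpen_interior).measure_pos μ ⟨x, hfx, hx⟩
    _ ≤ μ (Function.support f ∩ s) := by gcongr; exact interior_subset

theorem setIntegral_closedBall_eq_pow_smul {E F : Type*} [NormedAddCommGroup E]
    [NormedSpace ℝ E] [FiniteDimensional ℝ E] [MeasurableSpace E] [BorelSpace E]
    (μ : Measure E) [μ.IsAddHaarMeasure] [NormedAddCommGroup F] [NormedSpace ℝ F] (f : E → F)
    (c : E) {s : ℝ} (hs : 0 < s) :
    ∫ p in closedBall c s, f p ∂μ =
      s ^ Module.finrank ℝ E • ∫ y in closedBall 0 1, f (c + s • y) ∂μ := by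
  rw [Measure.setIntegral_comp_smul_of_pos μ (fun x => f (c + x)) _ hs, smul_smul,
    mul_inv_cancel₀ (by positivity), one_smul, _root_.smul_closedBall _ _ zero_le_one, smul_zero,
    Real.norm_of_nonneg hs.le, mul_one,
    ← (measurePreserving_add_left μ c).setIntegral_preimage_emb (measurableEmbedding_addLeft c)]
  simp [preimage_add_closedBall]

theorem mul_setIntegral_le_setIntegral_mul {α : Type*} [MeasurableSpace α] {μ : Measure α}
    {s K : Set α} (hs : MeasurableSet s) (hK : MeasurableSet K) (hsK : s ⊆ K) {f w : α → ℝ}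
    {m : ℝ} (hf : 0 ≤ f) (hw : ∀ x ∈ K, 0 ≤ w x) (hm : ∀ x ∈ s, m ≤ w x)
    (hfs : IntegrableOn f s μ) (hfwK : IntegrableOn (fun x => f x * w x) K μ) :
    m * ∫ x in s, f x ∂μ ≤ ∫ x in K, f x * w x ∂μ :=
  calc m * ∫ x in s, f x ∂μ = ∫ x in s, m * f x ∂μ := (integral_const_mul m _).symm
    _ ≤ ∫ x in s, f x * w x ∂μ :=
      setIntegral_mono_on (hfs.const_mul m) (hfwK.mono_set hsK) hs fun x hx => by
        rw [mul_comm]; exact mul_le_mul_of_nonneg_left (hm x hx) (hf x)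
    _ ≤ ∫ x in K, f x * w x ∂μ := by
      refine setIntegral_mono_set hfwK ?_ hsK.eventuallyLE
      filter_upwards [ae_restrict_mem hK] with x hx
      exact mul_nonneg (hf x) (hw x hx)

namespace MvPolynomial

theorem totalDegree_aeval_le {σ τ R : Type*} [CommSemiring R] {g : σ → MvPolynomial τ R}
    (hg : ∀ i, (g i).totalDegree ≤ 1) (p : MvPolynomial σ R) :
    (aeval g p).totalDegree ≤ p.totalDegree := by
  conv_lhs => rw [p.as_sum, map_sum]
  refine (totalDegree_finsetSum _ _).trans (Finset.sup_le fun d hd => ?_)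
  rw [aeval_monomial, ← C_eq_algebraMap]
  refine (totalDegree_mul _ _).trans ?_
  rw [totalDegree_C, zero_add, Finsupp.prod]
  refine (totalDegree_finsetProd _ _).trans ((Finset.sum_le_sum fun i _ => ?_).trans
    (le_totalDegree hd))
  exact (totalDegree_pow _ _).trans ((Nat.mul_le_mul_left _ (hg i)).trans_eq (mul_one _))

theorem eq_zero_of_forall_mem_ball_eval_eq_zero {σ : Type*} [Fintype σ] {P : MvPolynomial σ ℝ}
    {x : σ → ℝ} {ε : ℝ} (hε : 0 < ε) (h : ∀ y ∈ ball x ε, eval y P = 0) : P = 0 :=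
  funext_set (fun i => ball (x i) ε)
    (fun i => by rw [Real.ball_eq_Ioo]; exact Set.Ioo_infinite (by linarith))
    fun y hy => by simpa using h y (by rw [ball_pi x hε]; exact hy)

theorem eval_aeval {σ τ R : Type*} [CommSemiring R] (x : τ → R) (g : σ → MvPolynomial τ R)
    (p : MvPolynomial σ R) : eval x (aeval g p) = eval (fun i => eval x (g i)) p :=
  eval₂Hom_bind₁ _ _ _ _

theorem continuous_eval_prod (P : MvPolynomial (Fin 2) ℝ) :
    Continuous fun y : ℝ × ℝ => eval ![y.1, y.2] P :=
  (continuous_eval P).comp (by fun_prop)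

theorem setIntegral_unit_closedBall_eval_sq_pos {P : MvPolynomial (Fin 2) ℝ} (hP : P ≠ 0) :
    0 < ∫ y in closedBall (0 : ℝ × ℝ) 1, eval ![y.1, y.2] P ^ 2 := by
  obtain ⟨y, hy, hPy⟩ : ∃ y ∈ ball (0 : Fin 2 → ℝ) 1, eval y P ≠ 0 := by
    by_contra! h
    exact hP (eq_zero_of_forall_mem_ball_eval_eq_zero one_pos h)
  have hy' : (y 0, y 1) ∈ interior (closedBall (0 : ℝ × ℝ) 1) := by
    refine ball_subset_interior_closedBall ?_
    rw [mem_ball_zero_iff] at hy ⊢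
    exact max_lt ((norm_le_pi_norm y 0).trans_lt hy) ((norm_le_pi_norm y 1).trans_lt hy)
  have hsq := (continuous_eval_prod P).pow 2
  refine setIntegral_pos_of_continuous_of_mem_interior hsq (fun _ => sq_nonneg _)
    (hsq.continuousOn.integrableOn_compact (isCompact_closedBall _ _)) hy' ?_
  have hy_eta : ![y 0, y 1] = y := by ext i; fin_cases i <;> rfl
  simpa [hy_eta] using hPy

end MvPolynomial

namespace IsPolyDeg

open MvPolynomial

variable {l : ℕ} {v : ℝ × ℝ → ℝ}

theorem continuous_s13 (hv : IsPolyDeg l v) : Continuous v := by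
  obtain ⟨P, -, hP⟩ := hv
  rw [show v = _ from funext hP]
  exact continuous_eval_prod P

theorem comp_add_smul_s13 (hv : IsPolyDeg l v) (c : ℝ × ℝ) (s : ℝ) :
    IsPolyDeg l (fun y => v (c + s • y)) := by
  obtain ⟨P, hdeg, hP⟩ := hv
  refine ⟨aeval (fun i => C (![c.1, c.2] i) + C s * X i) P,
    (totalDegree_aeval_le (fun i => ?_) P).trans hdeg, fun y => ?_⟩
  · exact (totalDegree_add _ _).trans (max_le (by simp) ((totalDegree_mul _ _).trans (by simp)))
  · show v (c + s • y) = _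
    rw [hP, eval_aeval]
    refine congrArg (fun x => eval x P) (funext fun i => ?_)
    fin_cases i <;> simp

theorem exists_sq_le_mul_integral_unit_closedBall (l : ℕ) (R : ℝ) :
    ∃ C > 0, ∀ v, IsPolyDeg l v → ∀ y : ℝ × ℝ, ‖y‖ ≤ R →
      v y ^ 2 ≤ C * ∫ p in closedBall 0 1, v p ^ 2 := by
  let b := Module.finBasis ℝ (restrictTotalDegree (Fin 2) ℝ l)
  let G (a : Fin (Module.finrank ℝ (restrictTotalDegree (Fin 2) ℝ l)) → ℝ) (y : ℝ × ℝ) :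
      ℝ := eval ![y.1, y.2] (b.equivFun.symm a : MvPolynomial (Fin 2) ℝ)
  have hG : Continuous (Function.uncurry G) := by
    have hG_sum : Function.uncurry G =
        fun q => ∑ i, q.1 i * eval ![q.2.1, q.2.2] (b i : MvPolynomial (Fin 2) ℝ) := by
      funext q
      simp [G, Function.uncurry, Module.Basis.equivFun_symm_apply]
    rw [hG_sum]
    exact continuous_finsetSum _ fun i _ =>
      (continuous_apply i).fst'.mul ((continuous_eval_prod _).snd')
  have hG_smul : ∀ (r : ℝ) a y, G (r • a) y = r * G a y := by
    intro r a y
    simp only [G, map_smul, Submodule.coe_smul, smul_eval]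
  have hQ : Continuous fun a => ∫ y in closedBall (0 : ℝ × ℝ) 1, G a y ^ 2 :=
    continuous_parametric_integral_of_continuous (hG.pow 2) (isCompact_closedBall _ _)
  obtain ⟨C, hC, hCG⟩ :=
    exists_sq_le_mul_of_homogeneous (isCompact_closedBall (0 : ℝ × ℝ) R) hG hG_smul hQ
      (fun r a => by simp_rw [hG_smul, mul_pow, integral_const_mul])
      fun a ha => setIntegral_unit_closedBall_eval_sq_pos
        (Submodule.coe_eq_zero.not.2 ((LinearEquiv.map_ne_zero_iff _).2 ha))
  refine ⟨C, hC, fun v ⟨P, hdeg, hP⟩ y hy => ?_⟩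
  have hv : v = G (b.equivFun ⟨P, (mem_restrictTotalDegree _ _ _).2 hdeg⟩) := by
    funext p
    simp only [G, LinearEquiv.symm_apply_apply, hP]
  exact hv ▸ hCG _ y (mem_closedBall_zero_iff.2 hy)

theorem exists_sq_le_mul_integral_closedBall (l : ℕ) (R : ℝ) :
    ∃ C > 0, ∀ v, IsPolyDeg l v → ∀ (c : ℝ × ℝ) {s : ℝ}, 0 < s →
      ∀ x, dist x c ≤ R * s → s ^ 2 * v x ^ 2 ≤ C * ∫ p in closedBall c s, v p ^ 2 := by
  obtain ⟨C, hC, hunit⟩ := exists_sq_le_mul_integral_unit_closedBall l R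
  refine ⟨C, hC, fun v hv c s hs x hx => ?_⟩
  have hy : ‖s⁻¹ • (x - c)‖ ≤ R := by
    rw [norm_smul, norm_inv, Real.norm_of_nonneg hs.le, ← dist_eq_norm, inv_mul_le_iff₀ hs]
    linarith
  have hxy : c + s • s⁻¹ • (x - c) = x := by
    rw [smul_inv_smul₀ hs.ne', add_sub_cancel]
  have := hunit _ (hv.comp_add_smul_s13 c s) _ hy
  rw [hxy] at this
  rw [setIntegral_closedBall_eq_pow_smul volume _ c hs, Module.finrank_prod, Module.finrank_self,
    smul_eq_mul]
  calc s ^ 2 * v x ^ 2 ≤ s ^ 2 * (C * ∫ y in closedBall 0 1, v (c + s • y) ^ 2) := by gcongr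
    _ = C * (s ^ (1 + 1) * ∫ y in closedBall 0 1, v (c + s • y) ^ 2) := by ring

end IsPolyDeg

theorem abs_fst_sub_fst_le_dist {β : Type*} [PseudoMetricSpace β] (p q : ℝ × β) :
    |p.1 - q.1| ≤ dist p q := by
  rw [← Real.dist_eq]
  exact le_max_left _ _

theorem radius_le_fst_of_closedBall_subset {c : ℝ × ℝ} {t : ℝ} (ht : 0 ≤ t)
    (h : ∀ x ∈ closedBall c t, 0 ≤ x.1) : t ≤ c.1 := by
  have := h (c.1 - t, c.2) (by
    rw [mem_closedBall, dist_prod_same_right, Real.dist_eq, sub_sub_cancel_left, abs_neg,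
      abs_of_nonneg ht])
  linarith

theorem fst_mul_setIntegral_closedBall_half_le {K : Set (ℝ × ℝ)} (hK : MeasurableSet K)
    (hK_nonneg : ∀ x ∈ K, 0 ≤ x.1) {c : ℝ × ℝ} {t : ℝ} (ht : 0 ≤ t)
    (hball : closedBall c t ⊆ K)
    {f : ℝ × ℝ → ℝ} (hf : 0 ≤ f) (hfs : IntegrableOn f (closedBall c (t / 2)))
    (hfK : IntegrableOn (fun p => f p * p.1) K) :
    c.1 * ∫ p in closedBall c (t / 2), f p ≤ 2 * ∫ p in K, f p * p.1 := by
  have hct : t ≤ c.1 := radius_le_fst_of_closedBall_subset ht fun x hx => hK_nonneg x (hball hx)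
  have hhalf : ∀ p ∈ closedBall c (t / 2), c.1 / 2 ≤ p.1 := fun p hp => by
    have := (abs_le.1 ((abs_fst_sub_fst_le_dist p c).trans (mem_closedBall.1 hp))).1
    linarith
  have := mul_setIntegral_le_setIntegral_mul measurableSet_closedBall hK
    ((closedBall_subset_closedBall (by linarith)).trans hball) hf hK_nonneg hhalf hfs hfK
  linarith

/-- Weighted inverse estimate: there is `C = C(l, σ)` such that for every nondegenerate
shape-regular triangle `K ⊂ {r ≥ 0}` (diameter `h_K`, inscribed-circle diameter `≥ h_K/σ`)
and every polynomial `v` of degree `≤ l`,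
`r_K h_K² ‖v‖²_{L^∞(K)} ≤ C ∫_K v² r dr dz` where `r_K = max_K r`. -/
theorem weighted_inverse_estimate_Linfty (l : ℕ) (σ : ℝ) (hσ : 0 < σ) :
    ∃ C : ℝ, 0 < C ∧
      ∀ A B D : ℝ × ℝ, ¬ Collinear ℝ ({A, B, D} : Set (ℝ × ℝ)) →
        (∀ x ∈ convexHull ℝ ({A, B, D} : Set (ℝ × ℝ)), 0 ≤ x.1) →
        (∃ c : ℝ × ℝ, ∃ t : ℝ, 0 < t ∧
          Metric.closedBall c t ⊆ convexHull ℝ ({A, B, D} : Set (ℝ × ℝ)) ∧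
          Metric.diam (convexHull ℝ ({A, B, D} : Set (ℝ × ℝ))) ≤ σ * (2 * t)) →
        ∀ rK : ℝ, IsGreatest ((fun x : ℝ × ℝ => x.1) '' convexHull ℝ ({A, B, D} : Set (ℝ × ℝ))) rK →
        ∀ v : ℝ × ℝ → ℝ, IsPolyDeg l v →
          ∀ x ∈ convexHull ℝ ({A, B, D} : Set (ℝ × ℝ)),
            rK * (Metric.diam (convexHull ℝ ({A, B, D} : Set (ℝ × ℝ)))) ^ 2 * (v x) ^ 2
              ≤ C * ∫ p in convexHull ℝ ({A, B, D} : Set (ℝ × ℝ)), (v p) ^ 2 * p.1 := by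
  obtain ⟨C₀, hC₀, hpoly⟩ := IsPolyDeg.exists_sq_le_mul_integral_closedBall l (4 * σ)
  refine ⟨32 * σ ^ 2 * (1 + 2 * σ) * C₀, by positivity, ?_⟩
  rintro A B D - hK_nonneg ⟨c, t, ht, hball, hdiam⟩ rK ⟨⟨x₀, hx₀, rfl⟩, -⟩ v hv x hx
  set K := convexHull ℝ ({A, B, D} : Set (ℝ × ℝ))
  have hK : IsCompact K := (Set.toFinite _).isCompact_convexHull (𝕜 := ℝ)
  have hc : c ∈ K := hball (mem_closedBall_self ht.le)
  have hct : t ≤ c.1 :=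
    radius_le_fst_of_closedBall_subset ht.le fun p hp => hK_nonneg p (hball hp)
  have hrK : x₀.1 ≤ (1 + 2 * σ) * c.1 := by
    have := (abs_le.1 ((abs_fst_sub_fst_le_dist x₀ c).trans
      (dist_le_diam_of_mem hK.isBounded hx₀ hc))).2
    nlinarith
  have hc₁ : 0 ≤ c.1 := ht.le.trans hct
  have hdiam' : diam K ≤ 4 * σ * (t / 2) := by linarith
  have hvx := hpoly v hv c (half_pos ht) x
    ((dist_le_diam_of_mem hK.isBounded hx hc).trans hdiam')
  have hweight := fst_mul_setIntegral_closedBall_half_le hK.measurableSet hK_nonneg ht.le hball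
    (f := fun p => v p ^ 2) (fun p => sq_nonneg _)
    ((hv.continuous_s13.pow 2).continuousOn.integrableOn_compact (isCompact_closedBall _ _))
    (((hv.continuous_s13.pow 2).mul continuous_fst).continuousOn.integrableOn_compact hK)
  have hlocal : c.1 * ((t / 2) ^ 2 * v x ^ 2) ≤ 2 * C₀ * ∫ p in K, v p ^ 2 * p.1 := by
    nlinarith [mul_le_mul_of_nonneg_left hvx hc₁]
  calc x₀.1 * diam K ^ 2 * v x ^ 2
      ≤ (1 + 2 * σ) * c.1 * (4 * σ * (t / 2)) ^ 2 * v x ^ 2 := by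
        have : 0 ≤ diam K := diam_nonneg
        gcongr
    _ = 16 * σ ^ 2 * (1 + 2 * σ) * (c.1 * ((t / 2) ^ 2 * v x ^ 2)) := by ring
    _ ≤ 16 * σ ^ 2 * (1 + 2 * σ) * (2 * C₀ * ∫ p in K, v p ^ 2 * p.1) := by gcongr
    _ = 32 * σ ^ 2 * (1 + 2 * σ) * C₀ * ∫ p in K, v p ^ 2 * p.1 := by ring
end

section
/- (Weighted inverse estimate for gradients) There exists C depending only on l and the shape-regularity constant such that for every shape-regular triangle K in {r ≥ 0} and every polynomial v of degree ≤ l, ∫_K |∇v|² r dr dz ≤ C h_K^{-2} ∫_K v² r dr dz. -/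
open MeasureTheory

/-!
Represent `v` by its coefficients on the exponent box `{0, …, l}²`, a finite-dimensional space.
There both `w ↦ sup_{B(0,R)} |∇w|²` and `w ↦ ∫_{B(0,1)} w²` are continuous and 2-homogeneous, the
latter positive definite, so compactness of the unit sphere gives `|∇w|² ≤ C₀ ∫_{B(0,1)} w²` on
`B(0,R)`. Pulling back along `y ↦ c + s • y` turns this into `s⁴ |∇v(p)|² ≤ C₀ ∫_{B(c,s)} v²` for
`p ∈ B(c, R s)`. For the triangle, let `B(c,t)` be the inscribed ball and `s = h / (4σ) ≤ t/2`, so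
that `K ⊆ B(c, 4σ s)`. As `K ⊆ {r ≥ 0}` forces `t ≤ c.1`, the weight `r` is at least `c.1/2` on
`B(c,s)` and at most `(1 + 2σ) c.1` on `K`, so the two occurrences of `c.1` cancel.
-/

namespace WeightedInverseEstimate

noncomputable section

open Metric MvPolynomial Pointwise

section Homogeneous

variable {E X : Type*} [NormedAddCommGroup E] [NormedSpace ℝ E] [FiniteDimensional ℝ E]
  [TopologicalSpace X]

lemma exists_pos_mul_sq_norm_le_of_homogeneous [Nontrivial E] {g : E → ℝ} (hg : Continuous g)
    (hsmul : ∀ (s : ℝ) b, g (s • b) = s ^ 2 * g b) (hpos : ∀ b ≠ 0, 0 < g b) :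
    ∃ m, 0 < m ∧ ∀ b, m * ‖b‖ ^ 2 ≤ g b := by
  obtain ⟨u, hu, humin⟩ := (isCompact_sphere (0 : E) 1).exists_isMinOn
    (NormedSpace.sphere_nonempty.mpr zero_le_one) hg.continuousOn
  have hu0 : u ≠ 0 := ne_zero_of_mem_sphere one_ne_zero ⟨u, hu⟩
  refine ⟨g u, hpos u hu0, fun b => ?_⟩
  rcases eq_or_ne b 0 with rfl | hb
  · simpa using (hsmul 0 u).ge
  have hnb : ‖b‖ ≠ 0 := norm_ne_zero_iff.mpr hb
  have hmem : ‖b‖⁻¹ • b ∈ sphere (0 : E) 1 := by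
    rw [mem_sphere_zero_iff_norm, norm_smul, norm_inv, norm_norm, inv_mul_cancel₀ hnb]
  calc g u * ‖b‖ ^ 2 ≤ g (‖b‖⁻¹ • b) * ‖b‖ ^ 2 := by gcongr; exact humin hmem
    _ = g b := by rw [hsmul, inv_pow, mul_comm, mul_inv_cancel_left₀ (pow_ne_zero 2 hnb)]

lemma exists_le_mul_sq_norm_of_homogeneous {Y : Set X} (hY : IsCompact Y) {F : E → X → ℝ}
    (hF : Continuous (Function.uncurry F)) (hsmul : ∀ (s : ℝ) b y, F (s • b) y = s ^ 2 * F b y) :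
    ∃ M, 0 < M ∧ ∀ b, ∀ y ∈ Y, F b y ≤ M * ‖b‖ ^ 2 := by
  obtain ⟨M, hM⟩ := ((isCompact_sphere (0 : E) 1).prod hY).bddAbove_image hF.continuousOn
  refine ⟨max M 1, by positivity, fun b y hy => ?_⟩
  rcases eq_or_ne b 0 with rfl | hb
  · simpa using (hsmul 0 0 y).le
  have hnb : ‖b‖ ≠ 0 := norm_ne_zero_iff.mpr hb
  have hmem : ‖b‖⁻¹ • b ∈ sphere (0 : E) 1 := by
    rw [mem_sphere_zero_iff_norm, norm_smul, norm_inv, norm_norm, inv_mul_cancel₀ hnb]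
  calc F b y = ‖b‖ ^ 2 * F (‖b‖⁻¹ • b) y := by
        rw [← hsmul, smul_smul, mul_inv_cancel₀ hnb, one_smul]
    _ ≤ ‖b‖ ^ 2 * max M 1 := by
      gcongr
      exact (hM ⟨(‖b‖⁻¹ • b, y), ⟨hmem, hy⟩, rfl⟩).trans (le_max_left M 1)
    _ = max M 1 * ‖b‖ ^ 2 := mul_comm _ _

end Homogeneous

abbrev BoxIndex (l : ℕ) := Fin (l + 1) × Fin (l + 1)

def boxMonomial {l : ℕ} (q : BoxIndex l) (y : ℝ × ℝ) : ℝ := y.1 ^ (q.1 : ℕ) * y.2 ^ (q.2 : ℕ)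

def boxPoly {l : ℕ} (b : BoxIndex l → ℝ) (y : ℝ × ℝ) : ℝ := ∑ q, b q * boxMonomial q y

def boxExponent {l : ℕ} (q : BoxIndex l) : Fin 2 →₀ ℕ :=
  Finsupp.single 0 (q.1 : ℕ) + Finsupp.single 1 (q.2 : ℕ)

lemma boxExponent_injective (l : ℕ) : Function.Injective (boxExponent (l := l)) := by
  intro q q' h
  have h0 : (q.1 : ℕ) = q'.1 := by simpa [boxExponent] using DFunLike.congr_fun h 0
  have h1 : (q.2 : ℕ) = q'.2 := by simpa [boxExponent] using DFunLike.congr_fun h 1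
  exact Prod.ext (Fin.ext h0) (Fin.ext h1)

def boxMvPoly {l : ℕ} (b : BoxIndex l → ℝ) : MvPolynomial (Fin 2) ℝ :=
  ∑ q, monomial (boxExponent q) (b q)

lemma coeff_boxMvPoly {l : ℕ} (b : BoxIndex l → ℝ) (q : BoxIndex l) :
    (boxMvPoly b).coeff (boxExponent q) = b q := by
  classical
  simp [boxMvPoly, coeff_sum, coeff_monomial, (boxExponent_injective l).eq_iff]

lemma eval_boxMvPoly {l : ℕ} (b : BoxIndex l → ℝ) (y : ℝ × ℝ) :
    eval ![y.1, y.2] (boxMvPoly b) = boxPoly b y := by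
  simp [boxMvPoly, boxPoly, boxMonomial, boxExponent, eval_monomial]

lemma eq_boxMvPoly_of_totalDegree_le {l : ℕ} {P : MvPolynomial (Fin 2) ℝ}
    (hP : P.totalDegree ≤ l) : P = boxMvPoly fun q : BoxIndex l => P.coeff (boxExponent q) := by
  classical
  ext d
  by_cases hd : d ∈ Set.range (boxExponent (l := l))
  · obtain ⟨q, rfl⟩ := hd
    rw [coeff_boxMvPoly]
  · have : P.coeff d = 0 := by
      by_contra h
      have hle : ∀ i, d i ≤ l := fun i =>
        (Finsupp.le_degree i d).trans ((le_totalDegree (mem_support_iff.mpr h)).trans hP)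
      refine hd ⟨(⟨d 0, Nat.lt_succ_of_le (hle 0)⟩, ⟨d 1, Nat.lt_succ_of_le (hle 1)⟩), ?_⟩
      ext i
      fin_cases i <;> simp [boxExponent]
    rw [this, boxMvPoly, coeff_sum]
    refine (Finset.sum_eq_zero fun q _ => ?_).symm
    rw [coeff_monomial, if_neg fun h => hd ⟨q, h⟩]

lemma _root_.IsPolyDeg.exists_eq_boxPoly {l : ℕ} {v : ℝ × ℝ → ℝ} (hv : IsPolyDeg l v) :
    ∃ b : BoxIndex l → ℝ, v = boxPoly b := by
  obtain ⟨P, hP, hv⟩ := hv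
  refine ⟨fun q => P.coeff (boxExponent q), funext fun y => ?_⟩
  rw [hv, ← eval_boxMvPoly, ← eq_boxMvPoly_of_totalDegree_le hP]

lemma eq_zero_of_boxPoly_eq_zero_on_ball {l : ℕ} {b : BoxIndex l → ℝ} {r : ℝ} (hr : 0 < r)
    (hb : ∀ y ∈ ball (0 : ℝ × ℝ) r, boxPoly b y = 0) : b = 0 := by
  have hzero : boxMvPoly b = 0 := by
    refine funext_set (fun _ => Set.Ioo (-r) r) (fun _ => Set.Ioo_infinite (by linarith))
      fun x hx => ?_
    have hx' : x = ![(x 0, x 1).1, (x 0, x 1).2] := by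
      ext i; fin_cases i <;> rfl
    have hmem : (x 0, x 1) ∈ ball (0 : ℝ × ℝ) r := by
      simp only [mem_ball_zero_iff, Prod.norm_def, Real.norm_eq_abs, max_lt_iff, abs_lt]
      exact ⟨hx 0 trivial, hx 1 trivial⟩
    rw [hx', eval_boxMvPoly, hb _ hmem, map_zero]
  funext q
  rw [← coeff_boxMvPoly b q, hzero, coeff_zero, Pi.zero_apply]

lemma exists_affine_pow_eq_sum {l i : ℕ} (hi : i ≤ l) (c s : ℝ) :
    ∃ β : Fin (l + 1) → ℝ, ∀ x, (c + s * x) ^ i = ∑ k : Fin (l + 1), β k * x ^ (k : ℕ) := by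
  set p : Polynomial ℝ := (Polynomial.C s * Polynomial.X + Polynomial.C c) ^ i
  have hdeg : p.natDegree < l + 1 := Nat.lt_succ_of_le
    ((Polynomial.natDegree_pow_le_of_le i Polynomial.natDegree_linear_le).trans (by omega))
  refine ⟨fun k => p.coeff k, fun x => ?_⟩
  rw [Fin.sum_univ_eq_sum_range (fun k => p.coeff k * x ^ k),
    ← Polynomial.eval_eq_sum_range' hdeg]
  simp [p, add_comm]

lemma exists_boxPoly_comp_homothety {l : ℕ} (a : BoxIndex l → ℝ) (c : ℝ × ℝ) (s : ℝ) :
    ∃ b : BoxIndex l → ℝ, ∀ y, boxPoly a (c + s • y) = boxPoly b y := by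
  choose β₁ hβ₁ using fun q : BoxIndex l => exists_affine_pow_eq_sum (Fin.is_le q.1) c.1 s
  choose β₂ hβ₂ using fun q : BoxIndex l => exists_affine_pow_eq_sum (Fin.is_le q.2) c.2 s
  refine ⟨fun km => ∑ q, a q * (β₁ q km.1 * β₂ q km.2), fun y => ?_⟩
  calc boxPoly a (c + s • y)
      = ∑ q, a q * ((∑ k, β₁ q k * y.1 ^ (k : ℕ)) * ∑ m, β₂ q m * y.2 ^ (m : ℕ)) := by
        simp [boxPoly, boxMonomial, hβ₁, hβ₂]
    _ = ∑ q, ∑ km : BoxIndex l, a q * (β₁ q km.1 * β₂ q km.2) * boxMonomial km y := by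
        refine Finset.sum_congr rfl fun q _ => ?_
        simp_rw [Finset.sum_mul_sum, Finset.mul_sum, Fintype.sum_prod_type, boxMonomial]
        exact Finset.sum_congr rfl fun _ _ => Finset.sum_congr rfl fun _ _ => by ring
    _ = boxPoly _ y := by
        rw [Finset.sum_comm]
        simp [boxPoly, Finset.sum_mul]

lemma continuous_boxPoly_uncurry (l : ℕ) :
    Continuous fun p : (BoxIndex l → ℝ) × (ℝ × ℝ) => boxPoly p.1 p.2 := by
  unfold boxPoly boxMonomial; fun_prop

lemma continuous_boxPoly {l : ℕ} (b : BoxIndex l → ℝ) : Continuous (boxPoly b) :=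
  (continuous_boxPoly_uncurry l).comp (Continuous.prodMk_right b)

lemma _root_.IsPolyDeg.continuous_s14 {l : ℕ} {v : ℝ × ℝ → ℝ} (hv : IsPolyDeg l v) : Continuous v := by
  obtain ⟨b, rfl⟩ := hv.exists_eq_boxPoly
  exact continuous_boxPoly b

lemma boxPoly_smul {l : ℕ} (s : ℝ) (b : BoxIndex l → ℝ) (y : ℝ × ℝ) :
    boxPoly (s • b) y = s * boxPoly b y := by
  simp only [boxPoly, Pi.smul_apply, smul_eq_mul, Finset.mul_sum, mul_assoc]

lemma integral_boxPoly_sq_pos {l : ℕ} {b : BoxIndex l → ℝ} (hb : b ≠ 0) :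
    0 < ∫ y in closedBall (0 : ℝ × ℝ) 1, boxPoly b y ^ 2 := by
  have hcont : Continuous fun y => boxPoly b y ^ 2 := (continuous_boxPoly b).pow 2
  refine (setIntegral_nonneg measurableSet_closedBall fun _ _ => sq_nonneg _).lt_of_ne
    fun h0 => hb (eq_zero_of_boxPoly_eq_zero_on_ball one_pos fun y hy => ?_)
  have hae := (setIntegral_eq_zero_iff_of_nonneg_ae (ae_of_all _ fun _ => sq_nonneg _)
    (hcont.continuousOn.integrableOn_compact (isCompact_closedBall _ _))).mp h0.symm
  exact pow_eq_zero_iff two_ne_zero |>.mp <| Measure.eqOn_open_of_ae_eq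
    (ae_restrict_of_ae_restrict_of_subset ball_subset_closedBall hae) isOpen_ball
    hcont.continuousOn continuousOn_const hy

def gradNormSq (f : ℝ × ℝ → ℝ) (p : ℝ × ℝ) : ℝ := pdr f p ^ 2 + pdz f p ^ 2

lemma gradNormSq_nonneg (f : ℝ × ℝ → ℝ) (p : ℝ × ℝ) : 0 ≤ gradNormSq f p := by
  unfold gradNormSq; positivity

lemma gradNormSq_comp_homothety (f : ℝ × ℝ → ℝ) (c : ℝ × ℝ) (s : ℝ) (y : ℝ × ℝ) :
    gradNormSq (fun y => f (c + s • y)) y = s ^ 2 * gradNormSq f (c + s • y) := by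
  have h : fderiv ℝ (fun y => f (c + s • y)) y = s • fderiv ℝ f (c + s • y) := by
    rw [fderiv_comp_smul (f := fun x => f (c + x)), fderiv_comp_add_left]
  simp only [gradNormSq, pdr, pdz, h, smul_apply, smul_eq_mul]
  ring

lemma continuous_fderiv_boxMonomial_apply {l : ℕ} (q : BoxIndex l) (u : ℝ × ℝ) :
    Continuous fun y => fderiv ℝ (boxMonomial q) y u :=
  ((show ContDiff ℝ 1 (boxMonomial q) by unfold boxMonomial; fun_prop).continuous_fderiv
    one_ne_zero).clm_apply continuous_const

lemma fderiv_boxPoly_apply {l : ℕ} (b : BoxIndex l → ℝ) (y u : ℝ × ℝ) :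
    fderiv ℝ (boxPoly b) y u = ∑ q, b q * fderiv ℝ (boxMonomial q) y u := by
  have hd : ∀ q : BoxIndex l, DifferentiableAt ℝ (boxMonomial q) y := fun q => by
    unfold boxMonomial; fun_prop
  unfold boxPoly
  rw [fderiv_fun_sum fun q _ => (hd q).const_mul (b q)]
  simp [fderiv_const_mul (hd _)]

lemma gradNormSq_boxPoly {l : ℕ} (b : BoxIndex l → ℝ) (y : ℝ × ℝ) :
    gradNormSq (boxPoly b) y = (∑ q, b q * fderiv ℝ (boxMonomial q) y (1, 0)) ^ 2 +
      (∑ q, b q * fderiv ℝ (boxMonomial q) y (0, 1)) ^ 2 := by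
  simp only [gradNormSq, pdr, pdz, fderiv_boxPoly_apply]

lemma exists_gradNormSq_boxPoly_le_integral (l : ℕ) (R : ℝ) :
    ∃ C, 0 < C ∧ ∀ b : BoxIndex l → ℝ, ∀ y ∈ closedBall (0 : ℝ × ℝ) R,
      gradNormSq (boxPoly b) y ≤ C * ∫ z in closedBall (0 : ℝ × ℝ) 1, boxPoly b z ^ 2 := by
  obtain ⟨M, hM, hFM⟩ := exists_le_mul_sq_norm_of_homogeneous (isCompact_closedBall 0 R)
    (F := fun b y => gradNormSq (boxPoly b) y)
    (by
      have := continuous_fderiv_boxMonomial_apply (l := l)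
      simp only [Function.uncurry_def, gradNormSq_boxPoly]
      fun_prop)
    (fun s b y => by
      simp only [gradNormSq_boxPoly, Pi.smul_apply, smul_eq_mul, mul_assoc, ← Finset.mul_sum]
      ring)
  obtain ⟨m, hm, hmg⟩ := exists_pos_mul_sq_norm_le_of_homogeneous
    (g := fun b : BoxIndex l → ℝ => ∫ z in closedBall (0 : ℝ × ℝ) 1, boxPoly b z ^ 2)
    (continuous_parametric_integral_of_continuous
      ((continuous_boxPoly_uncurry l).pow 2) (isCompact_closedBall _ _))
    (fun s b => by simp only [boxPoly_smul, mul_pow, integral_const_mul])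
    fun b hb => integral_boxPoly_sq_pos hb
  refine ⟨M / m, by positivity, fun b y hy => ?_⟩
  calc gradNormSq (boxPoly b) y ≤ M * ‖b‖ ^ 2 := hFM b y hy
    _ = M / m * (m * ‖b‖ ^ 2) := by field_simp
    _ ≤ M / m * _ := by gcongr; exact hmg b

lemma setIntegral_closedBall_eq_integral_unitBall (g : ℝ × ℝ → ℝ) (c : ℝ × ℝ) {s : ℝ}
    (hs : 0 < s) :
    ∫ x in closedBall c s, g x = s ^ 2 * ∫ y in closedBall (0 : ℝ × ℝ) 1, g (c + s • y) := by
  have hscale : s • closedBall (0 : ℝ × ℝ) 1 = closedBall 0 s := by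
    rw [_root_.smul_closedBall _ _ zero_le_one]; simp [abs_of_pos hs]
  have htrans : ∫ x in closedBall (0 : ℝ × ℝ) s, g (c + x) = ∫ x in closedBall c s, g x := by
    have := (measurePreserving_add_left volume c).setIntegral_preimage_emb
      (MeasurableEquiv.addLeft c).measurableEmbedding g (closedBall c s)
    rwa [preimage_add_closedBall, sub_self] at this
  rw [Measure.setIntegral_comp_smul_of_pos volume (fun x => g (c + x)) _ hs, hscale, htrans,
    Module.finrank_prod, Module.finrank_self, smul_eq_mul, mul_inv_cancel_left₀ (by positivity)]

lemma exists_pow_four_mul_gradNormSq_le (l : ℕ) (R : ℝ) :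
    ∃ C, 0 < C ∧ ∀ v, IsPolyDeg l v → ∀ (c : ℝ × ℝ) (s : ℝ), 0 < s → ∀ p ∈ closedBall c (R * s),
      s ^ 4 * gradNormSq v p ≤ C * ∫ x in closedBall c s, v x ^ 2 := by
  obtain ⟨C, hC, hbound⟩ := exists_gradNormSq_boxPoly_le_integral l R
  refine ⟨C, hC, fun v hv c s hs p hp => ?_⟩
  obtain ⟨a, rfl⟩ := hv.exists_eq_boxPoly
  obtain ⟨b, hb⟩ := exists_boxPoly_comp_homothety a c s
  set y := s⁻¹ • (p - c)
  have hyp : c + s • y = p := by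
    rw [smul_inv_smul₀ hs.ne', add_sub_cancel]
  have hy : y ∈ closedBall (0 : ℝ × ℝ) R := by
    rw [mem_closedBall_zero_iff, norm_smul, norm_inv, Real.norm_of_nonneg hs.le,
      inv_mul_le_iff₀ hs, mul_comm, ← dist_eq_norm]
    exact hp
  have hgrad : gradNormSq (boxPoly b) y = s ^ 2 * gradNormSq (boxPoly a) p := by
    rw [← hyp, ← gradNormSq_comp_homothety, ← funext hb]
  have hint : ∫ x in closedBall c s, boxPoly a x ^ 2 =
      s ^ 2 * ∫ z in closedBall (0 : ℝ × ℝ) 1, boxPoly b z ^ 2 := by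
    simp only [setIntegral_closedBall_eq_integral_unitBall _ c hs, hb]
  calc s ^ 4 * gradNormSq (boxPoly a) p = s ^ 2 * gradNormSq (boxPoly b) y := by
        rw [hgrad]; ring
    _ ≤ s ^ 2 * (C * ∫ z in closedBall (0 : ℝ × ℝ) 1, boxPoly b z ^ 2) := by
        gcongr; exact hbound b y hy
    _ = C * ∫ x in closedBall c s, boxPoly a x ^ 2 := by rw [hint]; ring

lemma abs_fst_sub_le_dist (p c : ℝ × ℝ) : |p.1 - c.1| ≤ dist p c := by
  rw [Prod.dist_eq, Real.dist_eq]; exact le_max_left _ _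

lemma le_fst_of_closedBall_subset {K : Set (ℝ × ℝ)} (hK : ∀ x ∈ K, 0 ≤ x.1) {c : ℝ × ℝ}
    {t : ℝ} (ht : 0 ≤ t) (hball : closedBall c t ⊆ K) : t ≤ c.1 := by
  have hmem : (c.1 - t, c.2) ∈ closedBall c t := by
    simp [mem_closedBall, Prod.dist_eq, abs_of_nonneg ht, ht]
  linarith [hK _ (hball hmem)]

lemma volume_real_closedBall_prod (c : ℝ × ℝ) {r : ℝ} (hr : 0 ≤ r) :
    volume.real (closedBall c r) = (2 * r) ^ 2 := by
  rw [← closedBall_prod_same, measureReal_def, Measure.volume_eq_prod, Measure.prod_prod,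
    Real.volume_closedBall, Real.volume_closedBall, ENNReal.toReal_mul,
    ENNReal.toReal_ofReal (by linarith), sq]

lemma volume_real_le_four_mul_diam_sq {K : Set (ℝ × ℝ)} (hK : Bornology.IsBounded K) {c : ℝ × ℝ}
    (hc : c ∈ K) : volume.real K ≤ 4 * diam K ^ 2 := by
  calc volume.real K ≤ volume.real (closedBall c (diam K)) :=
        measureReal_mono (fun p hp => dist_le_diam_of_mem hK hp hc) measure_closedBall_lt_top.ne
    _ = 4 * diam K ^ 2 := by rw [volume_real_closedBall_prod c diam_nonneg]; ring

lemma setIntegral_le_mul_measureReal {α : Type*} [MeasurableSpace α] {μ : Measure α}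
    {K : Set α} (hK : μ K < ⊤) {f : α → ℝ} {M : ℝ} (hf0 : ∀ x ∈ K, 0 ≤ f x)
    (hfM : ∀ x ∈ K, f x ≤ M) : ∫ x in K, f x ∂μ ≤ M * μ.real K :=
  (le_abs_self _).trans <| norm_setIntegral_le_of_norm_le_const hK fun x hx => by
    rw [Real.norm_of_nonneg (hf0 x hx)]; exact hfM x hx

lemma mul_setIntegral_closedBall_le_setIntegral_mul_fst {v : ℝ × ℝ → ℝ}
    (hv : Continuous v) {K : Set (ℝ × ℝ)} (hK : IsCompact K) (hpos : ∀ x ∈ K, 0 ≤ x.1)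
    {c : ℝ × ℝ} {s : ℝ} (hsc : 2 * s ≤ c.1) (hball : closedBall c s ⊆ K) :
    c.1 / 2 * ∫ x in closedBall c s, v x ^ 2 ≤ ∫ x in K, v x ^ 2 * x.1 := by
  have hweighted : Continuous fun x : ℝ × ℝ => v x ^ 2 * x.1 := by fun_prop
  have hscaled : Continuous fun x : ℝ × ℝ => c.1 / 2 * v x ^ 2 := by fun_prop
  rw [← integral_const_mul]
  refine (setIntegral_mono_on
    (hscaled.continuousOn.integrableOn_compact (isCompact_closedBall _ _))
    (hweighted.continuousOn.integrableOn_compact (isCompact_closedBall _ _))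
    measurableSet_closedBall fun x hx => ?_).trans
    (setIntegral_mono_set (hweighted.continuousOn.integrableOn_compact hK)
      ((ae_restrict_mem hK.measurableSet).mono fun x hx => mul_nonneg (sq_nonneg _) (hpos x hx))
      hball.eventuallyLE)
  have hx1 := (abs_le.mp ((abs_fst_sub_le_dist x c).trans (mem_closedBall.mp hx))).1
  nlinarith [sq_nonneg (v x)]

theorem weighted_inverse_estimate_of_inscribed_ball (l : ℕ) {σ : ℝ} (hσ : 0 < σ) :
    ∃ C, 0 < C ∧ ∀ K : Set (ℝ × ℝ), IsCompact K → (∀ x ∈ K, 0 ≤ x.1) →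
      ∀ (c : ℝ × ℝ) (t : ℝ), 0 < t → closedBall c t ⊆ K → diam K ≤ σ * (2 * t) →
      ∀ v, IsPolyDeg l v →
        ∫ p in K, gradNormSq v p * p.1 ≤ C / diam K ^ 2 * ∫ p in K, v p ^ 2 * p.1 := by
  obtain ⟨C₀, hC₀, hinv⟩ := exists_pow_four_mul_gradNormSq_le l (4 * σ)
  refine ⟨2048 * σ ^ 4 * (1 + 2 * σ) * C₀, by positivity, ?_⟩
  intro K hK hpos c t ht hball hdiam v hv
  set h := diam K
  set s := h / (4 * σ) with hs
  set I := ∫ x in closedBall c s, v x ^ 2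
  have hcK : c ∈ K := hball (mem_closedBall_self ht.le)
  have htc : t ≤ c.1 := le_fst_of_closedBall_subset hpos ht.le hball
  have hth : 2 * t ≤ h := (diam_closedBall_eq c ht.le).ge.trans (diam_mono hball hK.isBounded)
  have hs0 : 0 < s := div_pos (by linarith) (by positivity)
  have hst : 2 * s ≤ t := by
    rw [hs, ← mul_div_assoc, div_le_iff₀ (by positivity)]; linarith
  have hI : 0 ≤ I := setIntegral_nonneg measurableSet_closedBall fun _ _ => sq_nonneg _
  have hpt : ∀ p ∈ K, gradNormSq v p * p.1 ≤ C₀ * I / s ^ 4 * ((1 + 2 * σ) * c.1) := by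
    intro p hp
    have hpc : dist p c ≤ h := dist_le_diam_of_mem hK.isBounded hp hcK
    have hgrad : s ^ 4 * gradNormSq v p ≤ C₀ * I := hinv v hv c s hs0 p
      (by rwa [mem_closedBall, hs, mul_div_cancel₀ _ (by positivity)])
    have hp1 : p.1 ≤ (1 + 2 * σ) * c.1 := by
      nlinarith [(abs_le.mp ((abs_fst_sub_le_dist p c).trans hpc)).2,
        mul_le_mul_of_nonneg_left htc hσ.le]
    rw [← le_div_iff₀' (pow_pos hs0 4)] at hgrad
    exact mul_le_mul hgrad hp1 (hpos p hp) (by positivity)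
  have hc : 0 < c.1 := ht.trans_le htc
  calc ∫ p in K, gradNormSq v p * p.1
      ≤ C₀ * I / s ^ 4 * ((1 + 2 * σ) * c.1) * (4 * h ^ 2) :=
        (setIntegral_le_mul_measureReal hK.measure_lt_top
          (fun p hp => mul_nonneg (gradNormSq_nonneg v p) (hpos p hp)) hpt).trans
          (mul_le_mul_of_nonneg_left (volume_real_le_four_mul_diam_sq hK.isBounded hcK)
            (by positivity))
    _ = 2048 * σ ^ 4 * (1 + 2 * σ) * C₀ / h ^ 2 * (c.1 / 2 * I) := by
        rw [hs]; field_simp; ring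
    _ ≤ _ := by
        gcongr
        exact mul_setIntegral_closedBall_le_setIntegral_mul_fst hv.continuous_s14 hK hpos (by linarith)
          ((closedBall_subset_closedBall (by linarith)).trans hball)

end

end WeightedInverseEstimate

/-- Weighted inverse estimate for gradients: there is `C = C(l, σ)` such that for every
nondegenerate shape-regular triangle `K ⊂ {r ≥ 0}` and every polynomial `v` of degree
`≤ l`, `∫_K |∇v|² r dr dz ≤ C h_K⁻² ∫_K v² r dr dz`. -/
theorem weighted_inverse_estimate_grad (l : ℕ) (σ : ℝ) (hσ : 0 < σ) :
    ∃ C : ℝ, 0 < C ∧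
      ∀ A B D : ℝ × ℝ, ¬ Collinear ℝ ({A, B, D} : Set (ℝ × ℝ)) →
        (∀ x ∈ convexHull ℝ ({A, B, D} : Set (ℝ × ℝ)), 0 ≤ x.1) →
        (∃ c : ℝ × ℝ, ∃ t : ℝ, 0 < t ∧
          Metric.closedBall c t ⊆ convexHull ℝ ({A, B, D} : Set (ℝ × ℝ)) ∧
          Metric.diam (convexHull ℝ ({A, B, D} : Set (ℝ × ℝ))) ≤ σ * (2 * t)) →
        ∀ v : ℝ × ℝ → ℝ, IsPolyDeg l v →
          (∫ p in convexHull ℝ ({A, B, D} : Set (ℝ × ℝ)),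
              ((pdr v p) ^ 2 + (pdz v p) ^ 2) * p.1)
            ≤ C / (Metric.diam (convexHull ℝ ({A, B, D} : Set (ℝ × ℝ)))) ^ 2 *
                ∫ p in convexHull ℝ ({A, B, D} : Set (ℝ × ℝ)), (v p) ^ 2 * p.1 := by
  obtain ⟨C, hC, hest⟩ := WeightedInverseEstimate.weighted_inverse_estimate_of_inscribed_ball l hσ
  refine ⟨C, hC, fun A B D _ hpos ⟨c, t, ht, hball, hdiam⟩ v hv => ?_⟩
  exact hest _ ((Set.toFinite _).isCompact_convexHull ℝ) hpos c t ht hball hdiam v hv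
end
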